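/- arXiv:2602.06658 — 2 statements merged into one kernel-verified Lean document; each statement's English description precedes it below -/
import Mathlib

section
/- Let X be a compact metric space, c : X × X → ℝ a continuous, symmetric, nonnegative cost, and α, β Borel probability measures on X. Then the Sinkhorn divergence converges as ε → +∞ to the maximum mean discrepancy associated with −c/2: lim_{ε→+∞} S_ε(α,β) = ∫∫ c dα⊗β − (1/2)·( ∫∫ c dα⊗α + ∫∫ c dβ⊗β ). -/
/-! The product coupling `α ⊗ β` has zero entropy, so `OT_ε(α, β) ≤ ∫∫ c dα dβ`. Conversely, if
`0 ≤ c ≤ C`, the Donsker–Varadhan inequality bounds `∫ c dπ + ε KL(π ‖ α ⊗ β)` from below by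
`-ε log ∫ exp (-c / ε) d(α ⊗ β)`, and `exp (-t) ≤ 1 - t + t² / 2` together with `log x ≤ x - 1`
shows that this is at least `∫∫ c dα dβ - C² / (2ε)`. Hence each of the three entropic costs in
`S_ε(α, β)` converges to the corresponding integral of `c`. -/

open MeasureTheory Classical Filter

/-- Kullback–Leibler divergence, with value `⊤` when `π` is not absolutely continuous
with respect to `μ` or the log-likelihood ratio is not integrable. -/
noncomputable def klE {Z : Type*} [MeasurableSpace Z] (π μ : Measure Z) : EReal :=
  if π ≪ μ ∧ Integrable (llr π μ) π then ((∫ z, llr π μ z ∂π : ℝ) : EReal) else ⊤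

/-- Entropic optimal transport cost for a cost `c`, temperature `ε`. -/
noncomputable def otE {X Y : Type*} [MeasurableSpace X] [MeasurableSpace Y]
    (c : X → Y → ℝ) (ε : ℝ) (α : Measure X) (β : Measure Y) [SFinite β] : EReal :=
  ⨅ π ∈ {π : Measure (X × Y) | π.map Prod.fst = α ∧ π.map Prod.snd = β},
    ((∫ p, c p.1 p.2 ∂π : ℝ) : EReal) + (ε : EReal) * klE π (α.prod β)

/-- Sinkhorn divergence for a symmetric cost `c` on `X`. -/
noncomputable def sinkhornE {X : Type*} [MeasurableSpace X]
    (c : X → X → ℝ) (ε : ℝ) (α β : Measure X) [SFinite α] [SFinite β] : EReal :=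
  otE c ε α β - (((1 : ℝ) / 2 : ℝ) : EReal) * (otE c ε α α + otE c ε β β)

lemma Real.exp_neg_le_one_sub_add_sq_div_two {t : ℝ} (ht : 0 ≤ t) :
    Real.exp (-t) ≤ 1 - t + t ^ 2 / 2 := by
  rw [Real.exp_neg, inv_le_iff_one_le_mul₀' (Real.exp_pos t)]
  calc (1 : ℝ) ≤ (1 + t + t ^ 2 / 2) * (1 - t + t ^ 2 / 2) := by nlinarith [sq_nonneg (t ^ 2)]
    _ ≤ Real.exp t * (1 - t + t ^ 2 / 2) := by
      gcongr
      · nlinarith [sq_nonneg (t - 1)]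
      · exact Real.quadratic_le_exp_of_nonneg ht

section
variable {Z : Type*} [MeasurableSpace Z]

lemma Measurable.integrable_of_nonneg_of_le {μ : Measure Z} [IsFiniteMeasure μ] {g : Z → ℝ}
    (hg : Measurable g) {C : ℝ} (hg0 : ∀ z, 0 ≤ g z) (hgC : ∀ z, g z ≤ C) : Integrable g μ :=
  .of_bound hg.aestronglyMeasurable C
    (ae_of_all _ fun z ↦ (Real.norm_of_nonneg (hg0 z)).trans_le (hgC z))

/-- The Donsker–Varadhan inequality: Gibbs' inequality for `π` against `μ.tilted f`. -/
lemma integral_sub_log_integral_exp_le_integral_llr {π μ : Measure Z}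
    [IsProbabilityMeasure π] [IsProbabilityMeasure μ] (hπμ : π ≪ μ)
    (hllr : Integrable (llr π μ) π) {f : Z → ℝ} (hfπ : Integrable f π)
    (hfμ : Integrable (fun z ↦ Real.exp (f z)) μ) :
    ∫ z, f z ∂π - Real.log (∫ z, Real.exp (f z) ∂μ) ≤ ∫ z, llr π μ z ∂π := by
  have := isProbabilityMeasure_tilted hfμ
  have hπν : π ≪ μ.tilted f := hπμ.trans (absolutelyContinuous_tilted hfμ)
  have hgibbs := InformationTheory.integral_llr_add_sub_measure_univ_nonneg hπν
    (integrable_llr_tilted_right hπμ hfπ hllr hfμ)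
  rw [integral_llr_tilted_right hπμ hfπ hfμ hllr] at hgibbs
  simp only [probReal_univ] at hgibbs
  linarith

lemma integral_exp_neg_div_le {μ : Measure Z} [IsProbabilityMeasure μ] {g : Z → ℝ}
    (hg : Integrable g μ) {C : ℝ} (hg0 : ∀ z, 0 ≤ g z) (hgC : ∀ z, g z ≤ C) {ε : ℝ} (hε : 0 < ε) :
    ∫ z, Real.exp (-(g z / ε)) ∂μ ≤ 1 - (∫ z, g z ∂μ) / ε + C ^ 2 / (2 * ε ^ 2) := by
  have hpt (z : Z) : Real.exp (-(g z / ε)) ≤ 1 + C ^ 2 / (2 * ε ^ 2) - g z / ε := by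
    have ht : 0 ≤ g z / ε := div_nonneg (hg0 z) hε.le
    calc Real.exp (-(g z / ε)) ≤ 1 - g z / ε + (g z / ε) ^ 2 / 2 :=
          Real.exp_neg_le_one_sub_add_sq_div_two ht
      _ ≤ 1 - g z / ε + (C / ε) ^ 2 / 2 := by gcongr; exact hgC z
      _ = 1 + C ^ 2 / (2 * ε ^ 2) - g z / ε := by ring
  calc ∫ z, Real.exp (-(g z / ε)) ∂μ ≤ ∫ z, (1 + C ^ 2 / (2 * ε ^ 2) - g z / ε) ∂μ :=
        integral_mono_of_nonneg (ae_of_all _ fun _ ↦ (Real.exp_pos _).le)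
          ((integrable_const _).sub (hg.div_const ε)) (ae_of_all _ hpt)
    _ = 1 - (∫ z, g z ∂μ) / ε + C ^ 2 / (2 * ε ^ 2) := by
      rw [integral_sub (integrable_const _) (hg.div_const ε), integral_const, integral_div]
      simp only [probReal_univ, one_smul]
      ring

/-- Both sides are compared with `-ε log ∫ exp (-g / ε) dμ`: from above by Donsker–Varadhan,
from below by `log x ≤ x - 1` and `integral_exp_neg_div_le`. -/
lemma integral_sub_le_integral_add_mul_integral_llr {π μ : Measure Z}
    [IsProbabilityMeasure π] [IsProbabilityMeasure μ] (hπμ : π ≪ μ)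
    (hllr : Integrable (llr π μ) π) {g : Z → ℝ} (hg : Measurable g) {C : ℝ}
    (hg0 : ∀ z, 0 ≤ g z) (hgC : ∀ z, g z ≤ C) {ε : ℝ} (hε : 0 < ε) :
    ∫ z, g z ∂μ - C ^ 2 / (2 * ε) ≤ ∫ z, g z ∂π + ε * ∫ z, llr π μ z ∂π := by
  have hbound (ν : Measure Z) [IsProbabilityMeasure ν] : Integrable g ν :=
    hg.integrable_of_nonneg_of_le hg0 hgC
  have hexp : Integrable (fun z ↦ Real.exp (-(g z / ε))) μ :=
    (hg.div_const ε).neg.exp.integrable_of_nonneg_of_le (fun _ ↦ (Real.exp_pos _).le)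
      fun z ↦ Real.exp_le_one_iff.2 (neg_nonpos.2 (div_nonneg (hg0 z) hε.le))
  have hDV := integral_sub_log_integral_exp_le_integral_llr (f := fun z ↦ -(g z / ε)) hπμ hllr
    ((hbound π).div_const ε).neg hexp
  have hlog := Real.log_le_sub_one_of_pos (integral_exp_pos (μ := μ) hexp)
  have hZ := integral_exp_neg_div_le (hbound μ) hg0 hgC hε
  rw [integral_neg, integral_div] at hDV
  have key : (∫ z, g z ∂μ) / ε - C ^ 2 / (2 * ε ^ 2) ≤
      (∫ z, g z ∂π) / ε + ∫ z, llr π μ z ∂π := by linarith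
  calc ∫ z, g z ∂μ - C ^ 2 / (2 * ε) = ε * ((∫ z, g z ∂μ) / ε - C ^ 2 / (2 * ε ^ 2)) := by
        field_simp
    _ ≤ ε * ((∫ z, g z ∂π) / ε + ∫ z, llr π μ z ∂π) := by gcongr
    _ = ∫ z, g z ∂π + ε * ∫ z, llr π μ z ∂π := by field_simp
end

lemma klE_self {Z : Type*} [MeasurableSpace Z] (μ : Measure Z) [SigmaFinite μ] :
    klE μ μ = 0 := by
  have hint : Integrable (llr μ μ) μ := (integrable_congr (llr_self μ)).2 (integrable_zero _ _ _)
  rw [klE, if_pos ⟨.rfl, hint⟩, integral_congr_ae (llr_self μ)]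
  simp

section
variable {X Y : Type*} [MeasurableSpace X] [MeasurableSpace Y] (c : X → Y → ℝ)
  (α : Measure X) (β : Measure Y) [IsProbabilityMeasure α] [IsProbabilityMeasure β]

lemma otE_le_integral_prod (ε : ℝ) : otE c ε α β ≤ ((∫ p, c p.1 p.2 ∂(α.prod β) : ℝ) : EReal) := by
  have hcoupling : α.prod β ∈ {π : Measure (X × Y) | π.map Prod.fst = α ∧ π.map Prod.snd = β} := by
    constructor <;> simp
  refine (iInf₂_le _ hcoupling).trans_eq ?_
  rw [klE_self, mul_zero, add_zero]

variable {c}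

lemma integral_prod_sub_le_otE (hc : Measurable fun p : X × Y ↦ c p.1 p.2) {C : ℝ}
    (hc0 : ∀ x y, 0 ≤ c x y) (hcC : ∀ x y, c x y ≤ C) {ε : ℝ} (hε : 0 < ε) :
    (((∫ p, c p.1 p.2 ∂(α.prod β)) - C ^ 2 / (2 * ε) : ℝ) : EReal) ≤ otE c ε α β := by
  refine le_iInf₂ fun π hπ ↦ ?_
  have : IsProbabilityMeasure (π.map Prod.fst) := hπ.1 ▸ inferInstance
  have := Measure.isProbabilityMeasure_of_map (μ := π) Prod.fst
  by_cases h : π ≪ α.prod β ∧ Integrable (llr π (α.prod β)) π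
  · rw [klE, if_pos h, ← EReal.coe_mul, ← EReal.coe_add, EReal.coe_le_coe_iff]
    exact integral_sub_le_integral_add_mul_integral_llr h.1 h.2 hc
      (fun p ↦ hc0 p.1 p.2) (fun p ↦ hcC p.1 p.2) hε
  · rw [klE, if_neg h, EReal.coe_mul_top_of_pos hε, EReal.coe_add_top]
    exact le_top

lemma tendsto_otE_atTop (hc : Measurable fun p : X × Y ↦ c p.1 p.2) {C : ℝ}
    (hc0 : ∀ x y, 0 ≤ c x y) (hcC : ∀ x y, c x y ≤ C) :
    Tendsto (fun ε ↦ otE c ε α β) atTop (nhds ((∫ x, ∫ y, c x y ∂β ∂α : ℝ) : EReal)) := by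
  rw [← integral_prod _ (hc.integrable_of_nonneg_of_le (fun p ↦ hc0 p.1 p.2) fun p ↦ hcC p.1 p.2)]
  have hlower : Tendsto (fun ε : ℝ ↦ (((∫ p, c p.1 p.2 ∂(α.prod β)) - C ^ 2 / (2 * ε) : ℝ) : EReal))
      atTop (nhds ((∫ p, c p.1 p.2 ∂(α.prod β) : ℝ) : EReal)) := by
    refine EReal.tendsto_coe.2 ?_
    simpa using tendsto_const_nhds.sub
      (tendsto_const_nhds.div_atTop (tendsto_id.const_mul_atTop (two_pos (α := ℝ))))
  refine tendsto_of_tendsto_of_tendsto_of_le_of_le' hlower tendsto_const_nhds ?_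
    (Eventually.of_forall (otE_le_integral_prod c α β))
  filter_upwards [eventually_gt_atTop 0] with ε hε
  exact integral_prod_sub_le_otE α β hc hc0 hcC hε
end

lemma EReal.eventuallyEq_coe_toReal_of_tendsto {ι : Type*} {l : Filter ι} {f : ι → EReal} {a : ℝ}
    (h : Tendsto f l (nhds a)) : f =ᶠ[l] fun i ↦ ((f i).toReal : EReal) := by
  filter_upwards [h.eventually_ne (EReal.coe_ne_top a), h.eventually_ne (EReal.coe_ne_bot a)]
    with i htop hbot
  exact (EReal.coe_toReal htop hbot).symm

theorem sinkhorn_tendsto_mmd_general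
    {X : Type*} [MetricSpace X] [CompactSpace X] [MeasurableSpace X] [BorelSpace X]
    (c : X → X → ℝ) (hc : Continuous fun p : X × X => c p.1 p.2)
    (hnonneg : ∀ x x', 0 ≤ c x x')
    (α β : Measure X) [IsProbabilityMeasure α] [IsProbabilityMeasure β] :
    Tendsto (fun ε : ℝ => sinkhornE c ε α β) atTop
      (nhds ((((∫ x, ∫ y, c x y ∂β ∂α)
        - (1 / 2) * ((∫ x, ∫ x', c x x' ∂α ∂α) + (∫ y, ∫ y', c y y' ∂β ∂β)) : ℝ)) : EReal)) := by
  obtain ⟨C, hC⟩ := (isCompact_range hc).bddAbove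
  have hlim (γ δ : Measure X) [IsProbabilityMeasure γ] [IsProbabilityMeasure δ] :=
    tendsto_otE_atTop γ δ hc.measurable hnonneg fun x y ↦ hC ⟨(x, y), rfl⟩
  have hreal (γ δ : Measure X) [IsProbabilityMeasure γ] [IsProbabilityMeasure δ] :=
    (EReal.tendsto_toReal (EReal.coe_ne_top _) (EReal.coe_ne_bot _)).comp (hlim γ δ)
  refine (EReal.tendsto_coe.2 ((hreal α β).sub
    (((hreal α α).add (hreal β β)).const_mul (1 / 2)))).congr' ?_
  filter_upwards [EReal.eventuallyEq_coe_toReal_of_tendsto (hlim α β),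
    EReal.eventuallyEq_coe_toReal_of_tendsto (hlim α α),
    EReal.eventuallyEq_coe_toReal_of_tendsto (hlim β β)] with ε hαβ hαα hββ
  rw [sinkhornE, hαβ, hαα, hββ]
  norm_cast

/-- as `ε → ∞` the Sinkhorn divergence converges to the maximum mean
discrepancy associated with `-c/2`. -/
theorem sinkhorn_tendsto_mmd
    {X : Type*} [MetricSpace X] [CompactSpace X] [MeasurableSpace X] [BorelSpace X]
    (c : X → X → ℝ) (hc : Continuous fun p : X × X => c p.1 p.2)
    (hsymm : ∀ x x', c x x' = c x' x) (hnonneg : ∀ x x', 0 ≤ c x x')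
    (α β : Measure X) [IsProbabilityMeasure α] [IsProbabilityMeasure β] :
    Tendsto (fun ε : ℝ => sinkhornE c ε α β) atTop
      (nhds ((((∫ x, ∫ y, c x y ∂β ∂α)
        - (1 / 2) * ((∫ x, ∫ x', c x x' ∂α ∂α) + (∫ y, ∫ y', c y y' ∂β ∂β)) : ℝ)) : EReal)) :=
  sinkhorn_tendsto_mmd_general c hc hnonneg α β
end

section
/- Let α be a compactly supported centered Borel probability measure on ℝ^D, β a compactly supported centered Borel probability measure on ℝ^E, and ε > 0. Define the dual function D_ε : ℝ^{D×E} → ℝ by D_ε(Γ) = ‖Γ‖_F² + (1/8)·OT_ε^Γ(α,β). If π ∈ Π(α,β) attains the infimum defining OT_ε^Γ(α,β), then D_ε is differentiable at Γ with gradient (with respect to the Frobenius inner product) equal to 2·Γ − 2·∫ x yᵀ dπ(x,y). -/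
open MeasureTheory Classical

/-- The set of couplings between `α` and `β`. -/
def couplings {X Y : Type*} [MeasurableSpace X] [MeasurableSpace Y]
    (α : Measure X) (β : Measure Y) : Set (Measure (X × Y)) :=
  {π | π.map Prod.fst = α ∧ π.map Prod.snd = β}

/-- The entropic OT cost `OT_ε^Γ(α,β)` for the cost
`c_Γ(x,y) = -16 ⟨Γ, x yᵀ⟩_F - 4 ‖x‖² ‖y‖²`, where the matrix `Γ` is encoded as an
element of the Euclidean (Frobenius) space `EuclideanSpace ℝ (Fin D × Fin E)`. -/
noncomputable def otGamma {D E : ℕ}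
    (α : Measure (EuclideanSpace ℝ (Fin D))) (β : Measure (EuclideanSpace ℝ (Fin E)))
    (ε : ℝ) (Γ : EuclideanSpace ℝ (Fin D × Fin E)) : EReal :=
  ⨅ π ∈ couplings α β,
    ((∫ p, (-16 * ∑ q : Fin D × Fin E, Γ q * (p.1 q.1 * p.2 q.2)
        - 4 * ‖p.1‖ ^ 2 * ‖p.2‖ ^ 2) ∂π : ℝ) : EReal)
      + (ε : EReal) * klE π (α.prod β)

/-!
`OT_ε^Γ` is an infimum, over couplings `ν`, of functions of `Γ` that are affine with slope
`-16 ∫ x yᵀ dν`, so it lies below its tangent plane at `Γ` given by the minimizer `π`. Conversely,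
a near-minimizer `ν` at a nearby `Γ'` is a near-minimizer at `Γ` too; the midpoint of `π` and `ν` is
again a coupling, so the midpoint gap of the entropy is small, and the strong convexity
`(a - b)² ≤ 32 · (a + b)/2 · gap(a, b)` of `t ↦ t log t` turns this into an `L¹` bound on the
difference of the densities with respect to `α ⊗ β`. With compact supports, the cross moment
`∫ x yᵀ dν` is then close to `∫ x yᵀ dπ`, which is the stability that an envelope (Danskin)
argument needs for differentiability.
-/

section RealInequalities

open Real InformationTheory

lemma sq_sqrt_sub_one_le_klFun {t : ℝ} (ht : 0 ≤ t) : (√t - 1) ^ 2 ≤ klFun t := by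
  rcases ht.eq_or_lt with rfl | ht
  · simp [klFun_zero]
  have hlog : 2 * (1 - (√t)⁻¹) ≤ log t := by
    linarith [one_sub_inv_le_log_of_pos (sqrt_pos.2 ht), log_sqrt ht.le]
  have hinv : t * (√t)⁻¹ = √t := by
    field_simp
    exact (sq_sqrt ht.le).symm
  rw [klFun_apply]
  nlinarith [sq_sqrt ht.le, mul_le_mul_of_nonneg_left hlog ht.le]

lemma sq_sub_one_le_eight_mul_klFun {t : ℝ} (ht₀ : 0 ≤ t) (ht₂ : t ≤ 2) :
    (t - 1) ^ 2 ≤ 8 * klFun t := by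
  have hs : √t ≤ 3 / 2 := by
    rw [sqrt_le_left (by norm_num)]
    linarith
  have hfac : t - 1 = (√t - 1) * (√t + 1) := by linear_combination -sq_sqrt ht₀
  rw [hfac, mul_pow]
  nlinarith [sq_sqrt_sub_one_le_klFun ht₀, sq_nonneg (√t - 1), sqrt_nonneg t]

lemma mul_log_eq_mul_log_div_add {x m : ℝ} (hm : 0 < m) :
    x * log x = x * log (x / m) + x * log m := by
  rcases eq_or_ne x 0 with rfl | hx
  · simp
  · rw [log_div hx hm.ne']
    ring

lemma sq_sub_le_mul_mulLog_gap {a b : ℝ} (ha : 0 ≤ a) (hb : 0 ≤ b) :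
    (a - b) ^ 2 ≤ 32 * ((a + b) / 2) *
      (a * log a / 2 + b * log b / 2 - (a + b) / 2 * log ((a + b) / 2)) := by
  set m := (a + b) / 2 with hm_def
  rcases (show 0 ≤ m by positivity).eq_or_lt with hm | hm
  · obtain rfl : a = 0 := by linarith
    obtain rfl : b = 0 := by linarith
    simp [m]
  have hA := sq_sub_one_le_eight_mul_klFun (t := a / m) (by positivity)
    (by rw [div_le_iff₀ hm]; linarith)
  have hB := sq_sub_one_le_eight_mul_klFun (t := b / m) (by positivity)
    (by rw [div_le_iff₀ hm]; linarith)
  -- after rescaling by `m` the two points sum to `2`, where the gap is the mean of `klFun`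
  have hgap : a * log a / 2 + b * log b / 2 - m * log m
      = m / 2 * (klFun (a / m) + klFun (b / m)) := by
    rw [mul_log_eq_mul_log_div_add (x := a) hm, mul_log_eq_mul_log_div_add (x := b) hm,
      klFun_apply, klFun_apply]
    field_simp
    ring
  have hBA : b / m - 1 = -(a / m - 1) := by field_simp; ring
  have hdiff : a - b = 2 * m * (a / m - 1) := by field_simp; ring
  rw [hBA, neg_sq] at hB
  rw [hgap, hdiff]
  nlinarith [mul_le_mul_of_nonneg_left (add_le_add hA hB) (sq_nonneg m)]

lemma abs_sub_le_mulLog_gap {a b s : ℝ} (ha : 0 ≤ a) (hb : 0 ≤ b) (hs : 0 < s) :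
    |a - b| ≤ s * (a + b) / 4 +
      16 / s * (a * log a / 2 + b * log b / 2 - (a + b) / 2 * log ((a + b) / 2)) := by
  set g := a * log a / 2 + b * log b / 2 - (a + b) / 2 * log ((a + b) / 2)
  have hsq : (a - b) ^ 2 ≤ 32 * ((a + b) / 2) * g := sq_sub_le_mul_mulLog_gap ha hb
  rcases (show 0 ≤ a + b by positivity).eq_or_lt with hab | hab
  · obtain rfl : a = 0 := by linarith
    obtain rfl : b = 0 := by linarith
    simp [g]
  have hamgm : |a - b| ≤ s * (a + b) / 4 + (a - b) ^ 2 / (s * (a + b)) := by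
    rw [← sq_abs (a - b), div_add_div _ _ (by norm_num) (by positivity),
      le_div_iff₀ (by positivity)]
    nlinarith [sq_nonneg (s * (a + b) - 2 * |a - b|)]
  calc |a - b| ≤ s * (a + b) / 4 + (a - b) ^ 2 / (s * (a + b)) := hamgm
    _ ≤ s * (a + b) / 4 + 32 * ((a + b) / 2) * g / (s * (a + b)) := by gcongr
    _ = s * (a + b) / 4 + 16 / s * g := by field_simp; ring

end RealInequalities

section Mixtures

open scoped ENNReal

variable {Z : Type*} [MeasurableSpace Z]

noncomputable def avgMeasure (ν₁ ν₂ : Measure Z) : Measure Z := (2⁻¹ : ℝ≥0∞) • (ν₁ + ν₂)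

instance (ν₁ ν₂ : Measure Z) [IsProbabilityMeasure ν₁] [IsProbabilityMeasure ν₂] :
    IsProbabilityMeasure (avgMeasure ν₁ ν₂) :=
  ⟨by simp [avgMeasure, ← two_mul, ENNReal.mul_inv_cancel]⟩

lemma avgMeasure_absolutelyContinuous {μ ν₁ ν₂ : Measure Z} (h₁ : ν₁ ≪ μ) (h₂ : ν₂ ≪ μ) :
    avgMeasure ν₁ ν₂ ≪ μ :=
  (h₁.add_left h₂).smul_left _

lemma integral_avgMeasure {F : Type*} [NormedAddCommGroup F] [NormedSpace ℝ F]
    {ν₁ ν₂ : Measure Z} {g : Z → F} (h₁ : Integrable g ν₁) (h₂ : Integrable g ν₂) :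
    ∫ z, g z ∂avgMeasure ν₁ ν₂ = (2⁻¹ : ℝ) • (∫ z, g z ∂ν₁ + ∫ z, g z ∂ν₂) := by
  rw [avgMeasure, integral_smul_measure, integral_add_measure h₁ h₂]
  simp

lemma toReal_rnDeriv_avgMeasure (ν₁ ν₂ μ : Measure Z) [IsFiniteMeasure ν₁] [IsFiniteMeasure ν₂]
    [SigmaFinite μ] :
    (fun z => ((avgMeasure ν₁ ν₂).rnDeriv μ z).toReal) =ᵐ[μ]
      fun z => ((ν₁.rnDeriv μ z).toReal + (ν₂.rnDeriv μ z).toReal) / 2 := by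
  filter_upwards [Measure.rnDeriv_smul_left_of_ne_top (ν₁ + ν₂) μ (r := 2⁻¹) (by simp),
    Measure.rnDeriv_add ν₁ ν₂ μ, Measure.rnDeriv_ne_top ν₁ μ, Measure.rnDeriv_ne_top ν₂ μ]
    with z hsmul hadd h₁ h₂
  rw [avgMeasure, hsmul, Pi.smul_apply, hadd, Pi.add_apply, smul_eq_mul, ENNReal.toReal_mul,
    ENNReal.toReal_add h₁ h₂]
  simp [div_eq_inv_mul]

lemma integral_mul_log_rnDeriv {ν μ : Measure Z} [SigmaFinite ν] [SigmaFinite μ] (h : ν ≪ μ) :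
    ∫ z, (ν.rnDeriv μ z).toReal * Real.log (ν.rnDeriv μ z).toReal ∂μ = ∫ z, llr ν μ z ∂ν := by
  simpa [llr] using integral_rnDeriv_smul (f := llr ν μ) h

lemma integrable_mul_log_rnDeriv {ν μ : Measure Z} [SigmaFinite ν] [SigmaFinite μ] (h : ν ≪ μ)
    (hi : Integrable (llr ν μ) ν) :
    Integrable (fun z => (ν.rnDeriv μ z).toReal * Real.log (ν.rnDeriv μ z).toReal) μ := by
  simpa [llr] using (integrable_rnDeriv_smul_iff h).2 hi

lemma integral_llr_nonneg {ν μ : Measure Z} [IsProbabilityMeasure ν] [IsProbabilityMeasure μ]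
    (h : ν ≪ μ) (hi : Integrable (llr ν μ) ν) : 0 ≤ ∫ z, llr ν μ z ∂ν := by
  simpa using InformationTheory.integral_llr_add_sub_measure_univ_nonneg h hi

lemma integrable_mul_log_avg {μ : Measure Z} [IsFiniteMeasure μ] {f g : Z → ℝ}
    (hf : Measurable f) (hg : Measurable g) (hf₀ : ∀ z, 0 ≤ f z) (hg₀ : ∀ z, 0 ≤ g z)
    (hφf : Integrable (fun z => f z * Real.log (f z)) μ)
    (hφg : Integrable (fun z => g z * Real.log (g z)) μ) :
    Integrable (fun z => (f z + g z) / 2 * Real.log ((f z + g z) / 2)) μ := by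
  refine Integrable.mono' ((hφf.abs.add hφg.abs).add (integrable_const 1))
    (by fun_prop) (Filter.Eventually.of_forall fun z => ?_)
  have hconv := Real.convexOn_mul_log.2 (Set.mem_Ici.2 (hf₀ z)) (Set.mem_Ici.2 (hg₀ z))
    (by norm_num : (0 : ℝ) ≤ 1 / 2) (by norm_num : (0 : ℝ) ≤ 1 / 2) (by norm_num)
  have hlow := Real.self_sub_one_le_mul_log (x := (f z + g z) / 2) (by linarith [hf₀ z, hg₀ z])
  simp only [smul_eq_mul] at hconv
  rw [show 1 / 2 * f z + 1 / 2 * g z = (f z + g z) / 2 by ring] at hconv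
  simp only [Pi.add_apply, Real.norm_eq_abs, abs_le]
  constructor
  · linarith [abs_nonneg (f z * Real.log (f z)), abs_nonneg (g z * Real.log (g z)), hf₀ z, hg₀ z]
  · linarith [le_abs_self (f z * Real.log (f z)), le_abs_self (g z * Real.log (g z)),
      abs_nonneg (f z * Real.log (f z)), abs_nonneg (g z * Real.log (g z))]

lemma norm_integral_sub_integral_le {F : Type*} [NormedAddCommGroup F] [NormedSpace ℝ F]
    {μ ν₁ ν₂ : Measure Z} [SigmaFinite μ] [IsFiniteMeasure ν₁] [IsFiniteMeasure ν₂]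
    (h₁ : ν₁ ≪ μ) (h₂ : ν₂ ≪ μ) {g : Z → F} (hg₁ : Integrable g ν₁) (hg₂ : Integrable g ν₂)
    {C : ℝ} (hC : ∀ᵐ z ∂μ, ‖g z‖ ≤ C) :
    ‖∫ z, g z ∂ν₁ - ∫ z, g z ∂ν₂‖ ≤
      C * ∫ z, |(ν₁.rnDeriv μ z).toReal - (ν₂.rnDeriv μ z).toReal| ∂μ := by
  rw [← integral_rnDeriv_smul h₁, ← integral_rnDeriv_smul h₂,
    ← integral_sub ((integrable_rnDeriv_smul_iff h₁).2 hg₁)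
      ((integrable_rnDeriv_smul_iff h₂).2 hg₂), ← integral_const_mul]
  refine norm_integral_le_of_norm_le
    ((Measure.integrable_toReal_rnDeriv.sub Measure.integrable_toReal_rnDeriv).abs.const_mul C) ?_
  filter_upwards [hC] with z hz
  rw [← sub_smul, norm_smul, Real.norm_eq_abs, mul_comm]
  exact mul_le_mul_of_nonneg_right hz (abs_nonneg _)

section StrongConvexity

variable {μ ν₁ ν₂ : Measure Z} [IsProbabilityMeasure μ] [IsProbabilityMeasure ν₁]
  [IsProbabilityMeasure ν₂]

lemma integrable_mul_log_toReal_rnDeriv_avg (h₁ : ν₁ ≪ μ) (h₂ : ν₂ ≪ μ)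
    (hi₁ : Integrable (llr ν₁ μ) ν₁) (hi₂ : Integrable (llr ν₂ μ) ν₂) :
    Integrable (fun z => ((ν₁.rnDeriv μ z).toReal + (ν₂.rnDeriv μ z).toReal) / 2 *
      Real.log (((ν₁.rnDeriv μ z).toReal + (ν₂.rnDeriv μ z).toReal) / 2)) μ :=
  integrable_mul_log_avg (by fun_prop) (by fun_prop) (fun _ => ENNReal.toReal_nonneg)
    (fun _ => ENNReal.toReal_nonneg) (integrable_mul_log_rnDeriv h₁ hi₁)
    (integrable_mul_log_rnDeriv h₂ hi₂)

lemma integrable_llr_avgMeasure (h₁ : ν₁ ≪ μ) (h₂ : ν₂ ≪ μ) (hi₁ : Integrable (llr ν₁ μ) ν₁)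
    (hi₂ : Integrable (llr ν₂ μ) ν₂) :
    Integrable (llr (avgMeasure ν₁ ν₂) μ) (avgMeasure ν₁ ν₂) := by
  rw [← integrable_rnDeriv_smul_iff (avgMeasure_absolutelyContinuous h₁ h₂)]
  refine (integrable_mul_log_toReal_rnDeriv_avg h₁ h₂ hi₁ hi₂).congr ?_
  filter_upwards [toReal_rnDeriv_avgMeasure ν₁ ν₂ μ] with z hz
  simp [llr, hz]

lemma integral_llr_avgMeasure (h₁ : ν₁ ≪ μ) (h₂ : ν₂ ≪ μ) :
    ∫ z, llr (avgMeasure ν₁ ν₂) μ z ∂avgMeasure ν₁ ν₂ =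
      ∫ z, ((ν₁.rnDeriv μ z).toReal + (ν₂.rnDeriv μ z).toReal) / 2 *
        Real.log (((ν₁.rnDeriv μ z).toReal + (ν₂.rnDeriv μ z).toReal) / 2) ∂μ := by
  rw [← integral_mul_log_rnDeriv (avgMeasure_absolutelyContinuous h₁ h₂)]
  refine integral_congr_ae ?_
  filter_upwards [toReal_rnDeriv_avgMeasure ν₁ ν₂ μ] with z hz
  rw [hz]

/-- Optimizing over `s` gives `‖dν₁/dμ - dν₂/dμ‖₁² ≤ 32 · (midpoint gap of the entropy)`. -/
lemma integral_abs_sub_toReal_rnDeriv_le (h₁ : ν₁ ≪ μ) (h₂ : ν₂ ≪ μ)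
    (hi₁ : Integrable (llr ν₁ μ) ν₁) (hi₂ : Integrable (llr ν₂ μ) ν₂) {s : ℝ} (hs : 0 < s) :
    ∫ z, |(ν₁.rnDeriv μ z).toReal - (ν₂.rnDeriv μ z).toReal| ∂μ ≤
      s / 2 + 16 / s * ((∫ z, llr ν₁ μ z ∂ν₁) / 2 + (∫ z, llr ν₂ μ z ∂ν₂) / 2 -
        ∫ z, llr (avgMeasure ν₁ ν₂) μ z ∂avgMeasure ν₁ ν₂) := by
  rw [integral_llr_avgMeasure h₁ h₂, ← integral_mul_log_rnDeriv h₁,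
    ← integral_mul_log_rnDeriv h₂]
  have hφ₁ := integrable_mul_log_rnDeriv h₁ hi₁
  have hφ₂ := integrable_mul_log_rnDeriv h₂ hi₂
  have hφm := integrable_mul_log_toReal_rnDeriv_avg h₁ h₂ hi₁ hi₂
  set f₁ := fun z => (ν₁.rnDeriv μ z).toReal
  set f₂ := fun z => (ν₂.rnDeriv μ z).toReal
  have hf₁ : Integrable f₁ μ := Measure.integrable_toReal_rnDeriv
  have hf₂ : Integrable f₂ μ := Measure.integrable_toReal_rnDeriv
  have hmass₁ : ∫ z, f₁ z ∂μ = 1 := by simp [f₁, Measure.integral_toReal_rnDeriv h₁]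
  have hmass₂ : ∫ z, f₂ z ∂μ = 1 := by simp [f₂, Measure.integral_toReal_rnDeriv h₂]
  have hA : Integrable (fun z => s * (f₁ z + f₂ z) / 4) μ :=
    ((hf₁.add hf₂).const_mul s).div_const 4
  have hB : Integrable
      (fun z => f₁ z * Real.log (f₁ z) / 2 + f₂ z * Real.log (f₂ z) / 2) μ :=
    (hφ₁.div_const 2).add (hφ₂.div_const 2)
  have hC : Integrable (fun z => 16 / s * (f₁ z * Real.log (f₁ z) / 2 +
      f₂ z * Real.log (f₂ z) / 2 - (f₁ z + f₂ z) / 2 * Real.log ((f₁ z + f₂ z) / 2))) μ :=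
    (hB.sub hφm).const_mul _
  calc ∫ z, |f₁ z - f₂ z| ∂μ
      ≤ ∫ z, (s * (f₁ z + f₂ z) / 4 + 16 / s * (f₁ z * Real.log (f₁ z) / 2 +
          f₂ z * Real.log (f₂ z) / 2 - (f₁ z + f₂ z) / 2 * Real.log ((f₁ z + f₂ z) / 2))) ∂μ :=
        integral_mono (hf₁.sub hf₂).abs (hA.add hC) fun z =>
          abs_sub_le_mulLog_gap ENNReal.toReal_nonneg ENNReal.toReal_nonneg hs
    _ = _ := by
        rw [integral_add hA hC, integral_div, integral_const_mul, integral_add hf₁ hf₂, hmass₁,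
          hmass₂, integral_const_mul, integral_sub hB hφm,
          integral_add (hφ₁.div_const 2) (hφ₂.div_const 2), integral_div, integral_div]
        ring

end StrongConvexity

end Mixtures

section Couplings

open scoped ENNReal

variable {X Y : Type*} [MeasurableSpace X] [MeasurableSpace Y] {α : Measure X} {β : Measure Y}
  {π : Measure (X × Y)}

lemma isProbabilityMeasure_of_mem_couplings [IsProbabilityMeasure α] (h : π ∈ couplings α β) :
    IsProbabilityMeasure π := by
  have : IsProbabilityMeasure (π.map Prod.fst) := h.1 ▸ ‹_›
  exact Measure.isProbabilityMeasure_of_map Prod.fst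

lemma prod_mem_couplings [IsProbabilityMeasure α] [IsProbabilityMeasure β] :
    α.prod β ∈ couplings α β := by
  simp [couplings]

lemma avgMeasure_mem_couplings {π₁ π₂ : Measure (X × Y)} (h₁ : π₁ ∈ couplings α β)
    (h₂ : π₂ ∈ couplings α β) : avgMeasure π₁ π₂ ∈ couplings α β := by
  refine ⟨?_, ?_⟩ <;>
  [rw [avgMeasure, Measure.map_smul, Measure.map_add _ _ measurable_fst, h₁.1, h₂.1];
    rw [avgMeasure, Measure.map_smul, Measure.map_add _ _ measurable_snd, h₁.2, h₂.2]] <;>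
  rw [← two_smul ℝ≥0∞, smul_smul, ENNReal.inv_mul_cancel (by simp) (by simp), one_smul]

lemma ae_fst_of_mem_couplings (h : π ∈ couplings α β) {P : X → Prop} (hP : ∀ᵐ x ∂α, P x) :
    ∀ᵐ p ∂π, P p.1 :=
  ae_of_ae_map measurable_fst.aemeasurable (h.1 ▸ hP)

lemma ae_snd_of_mem_couplings (h : π ∈ couplings α β) {P : Y → Prop} (hP : ∀ᵐ y ∂β, P y) :
    ∀ᵐ p ∂π, P p.2 :=
  ae_of_ae_map measurable_snd.aemeasurable (h.2 ▸ hP)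

def finiteEntropyCouplings (α : Measure X) (β : Measure Y) : Set (Measure (X × Y)) :=
  {ν | ν ∈ couplings α β ∧ ν ≪ α.prod β ∧ Integrable (llr ν (α.prod β)) ν}

end Couplings

lemma exists_ae_norm_le_of_isCompact {F : Type*} [NormedAddCommGroup F] [MeasurableSpace F]
    {μ : Measure F} {K : Set F} (hK : IsCompact K) (hμK : μ Kᶜ = 0) :
    ∃ R, ∀ᵐ x ∂μ, ‖x‖ ≤ R := by
  obtain ⟨R, hR⟩ := hK.isBounded.exists_norm_le
  exact ⟨R, Filter.mem_of_superset (mem_ae_iff.2 hμK) hR⟩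

section Envelope

open scoped RealInnerProductSpace

variable {V ι : Type*} [NormedAddCommGroup V] [InnerProductSpace ℝ V] [CompleteSpace V]

/-- A Danskin-type envelope theorem for an infimum of affine functions. -/
theorem hasGradientAt_of_isGLB_affine {F : V → ℝ} {S : Set ι} {a : ι → ℝ} {m : ι → V}
    {R : ℝ} {x : V} {σ : ι}
    (hF : ∀ y, IsGLB ((fun ν => a ν + ⟪y, m ν⟫) '' S) (F y))
    (hm : ∀ ν ∈ S, ‖m ν‖ ≤ R) (hσ : σ ∈ S) (hσx : F x = a σ + ⟪x, m σ⟫)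
    (hstable : ∀ κ > 0, ∃ η > 0, ∀ ν ∈ S, a ν + ⟪x, m ν⟫ ≤ F x + η → ‖m ν - m σ‖ ≤ κ) :
    HasGradientAt F (m σ) x := by
  rw [hasGradientAt_iff_isLittleO_nhds_zero, Asymptotics.isLittleO_iff]
  intro c hc
  obtain ⟨η, hη, hnear⟩ := hstable (c / 2) (by positivity)
  have hR : 0 ≤ R := (norm_nonneg _).trans (hm σ hσ)
  have hr : 0 < η / (2 * R + c / 2) := by positivity
  filter_upwards [Metric.ball_mem_nhds 0 hr] with h hh
  rcases eq_or_ne h 0 with rfl | h0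
  · simp
  rw [mem_ball_zero_iff, lt_div_iff₀ (by positivity)] at hh
  have hδ : 0 < c / 2 * ‖h‖ := by positivity
  have hupper : F (x + h) ≤ F x + ⟪h, m σ⟫ := by
    have hle : F (x + h) ≤ a σ + ⟪x + h, m σ⟫ := (hF (x + h)).1 ⟨σ, hσ, rfl⟩
    rw [inner_add_left] at hle
    linarith
  obtain ⟨_, ⟨ν, hν, rfl⟩, -, hlt⟩ :=
    (hF (x + h)).exists_between (lt_add_of_pos_right _ hδ)
  have hFx : F x ≤ a ν + ⟪x, m ν⟫ := (hF x).1 ⟨ν, hν, rfl⟩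
  simp only [inner_add_left] at hlt
  have hσh : |⟪h, m σ⟫| ≤ ‖h‖ * R :=
    (abs_real_inner_le_norm _ _).trans (mul_le_mul_of_nonneg_left (hm σ hσ) (norm_nonneg h))
  have hνh : |⟪h, m ν⟫| ≤ ‖h‖ * R :=
    (abs_real_inner_le_norm _ _).trans (mul_le_mul_of_nonneg_left (hm ν hν) (norm_nonneg h))
  -- `ν` is nearly optimal at `x` as well, so its slope is close to `m σ`
  have hclose : ‖m ν - m σ‖ ≤ c / 2 := by
    refine hnear ν hν ?_
    linarith [abs_le.1 hσh, abs_le.1 hνh]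
  have hdiff : |⟪h, m ν - m σ⟫| ≤ ‖h‖ * (c / 2) :=
    (abs_real_inner_le_norm _ _).trans (mul_le_mul_of_nonneg_left hclose (norm_nonneg h))
  rw [inner_sub_right] at hdiff
  rw [Real.norm_eq_abs, abs_le, real_inner_comm]
  constructor <;> linarith [abs_le.1 hdiff]

theorem HasGradientAt.norm_sq_add_const_mul {F : V → ℝ} {g x : V} (hF : HasGradientAt F g x)
    (c : ℝ) : HasGradientAt (fun y => ‖y‖ ^ 2 + c * F y) ((2 : ℝ) • x + c • g) x := by
  rw [hasGradientAt_iff_hasFDerivAt] at *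
  refine ((hasStrictFDerivAt_norm_sq x).hasFDerivAt.add (hF.const_mul c)).congr_fderiv ?_
  ext y
  simp

end Envelope

section EntropicOT

open scoped RealInnerProductSpace

variable {D E : ℕ}

def outerProd (p : EuclideanSpace ℝ (Fin D) × EuclideanSpace ℝ (Fin E)) :
    EuclideanSpace ℝ (Fin D × Fin E) :=
  WithLp.toLp 2 fun q => p.1 q.1 * p.2 q.2

noncomputable def crossMoment (ν : Measure (EuclideanSpace ℝ (Fin D) × EuclideanSpace ℝ (Fin E))) :
    EuclideanSpace ℝ (Fin D × Fin E) :=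
  ∫ p, outerProd p ∂ν

noncomputable def transportCost (Γ : EuclideanSpace ℝ (Fin D × Fin E))
    (p : EuclideanSpace ℝ (Fin D) × EuclideanSpace ℝ (Fin E)) : ℝ :=
  -16 * ∑ q : Fin D × Fin E, Γ q * (p.1 q.1 * p.2 q.2) - 4 * ‖p.1‖ ^ 2 * ‖p.2‖ ^ 2

noncomputable def entropicObjective
    (α : Measure (EuclideanSpace ℝ (Fin D))) (β : Measure (EuclideanSpace ℝ (Fin E)))
    (ε : ℝ) (Γ : EuclideanSpace ℝ (Fin D × Fin E))
    (ν : Measure (EuclideanSpace ℝ (Fin D) × EuclideanSpace ℝ (Fin E))) : ℝ :=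
  ∫ p, transportCost Γ p ∂ν + ε * ∫ p, llr ν (α.prod β) p ∂ν

lemma norm_outerProd (p : EuclideanSpace ℝ (Fin D) × EuclideanSpace ℝ (Fin E)) :
    ‖outerProd p‖ = ‖p.1‖ * ‖p.2‖ := by
  rw [← sq_eq_sq₀ (norm_nonneg _) (by positivity), mul_pow, EuclideanSpace.real_norm_sq_eq,
    EuclideanSpace.real_norm_sq_eq, EuclideanSpace.real_norm_sq_eq, Finset.sum_mul_sum,
    ← Finset.univ_product_univ, Finset.sum_product]
  simp [outerProd, mul_pow]

lemma continuous_outerProd : Continuous (outerProd (D := D) (E := E)) := by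
  unfold outerProd
  fun_prop

lemma inner_outerProd (Γ : EuclideanSpace ℝ (Fin D × Fin E))
    (p : EuclideanSpace ℝ (Fin D) × EuclideanSpace ℝ (Fin E)) :
    ⟪Γ, outerProd p⟫ = ∑ q : Fin D × Fin E, Γ q * (p.1 q.1 * p.2 q.2) := by
  simp [outerProd, PiLp.inner_apply, mul_comm]

lemma crossMoment_apply {ν : Measure (EuclideanSpace ℝ (Fin D) × EuclideanSpace ℝ (Fin E))}
    (hν : Integrable outerProd ν) (q : Fin D × Fin E) :
    crossMoment ν q = ∫ p, p.1 q.1 * p.2 q.2 ∂ν :=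
  ((EuclideanSpace.proj q).integral_comp_comm hν).symm

lemma transportCost_eq (Γ : EuclideanSpace ℝ (Fin D × Fin E))
    (p : EuclideanSpace ℝ (Fin D) × EuclideanSpace ℝ (Fin E)) :
    transportCost Γ p = -16 * ⟪Γ, outerProd p⟫ - 4 * ‖outerProd p‖ ^ 2 := by
  rw [transportCost, inner_outerProd, norm_outerProd]
  ring

section BoundedSupport

variable {α : Measure (EuclideanSpace ℝ (Fin D))} {β : Measure (EuclideanSpace ℝ (Fin E))}
  {RX RY ε : ℝ}
  {ν π : Measure (EuclideanSpace ℝ (Fin D) × EuclideanSpace ℝ (Fin E))}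

lemma ae_norm_outerProd_le (hα : ∀ᵐ x ∂α, ‖x‖ ≤ RX) (hβ : ∀ᵐ y ∂β, ‖y‖ ≤ RY)
    (hν : ν ∈ couplings α β) : ∀ᵐ p ∂ν, ‖outerProd p‖ ≤ RX * RY := by
  filter_upwards [ae_fst_of_mem_couplings hν hα, ae_snd_of_mem_couplings hν hβ] with p h₁ h₂
  rw [norm_outerProd]
  exact mul_le_mul h₁ h₂ (norm_nonneg _) ((norm_nonneg _).trans h₁)

lemma integrable_outerProd [IsProbabilityMeasure α] (hα : ∀ᵐ x ∂α, ‖x‖ ≤ RX)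
    (hβ : ∀ᵐ y ∂β, ‖y‖ ≤ RY) (hν : ν ∈ couplings α β) : Integrable outerProd ν :=
  have := isProbabilityMeasure_of_mem_couplings hν
  .of_bound continuous_outerProd.aestronglyMeasurable _ (ae_norm_outerProd_le hα hβ hν)

lemma norm_crossMoment_le [IsProbabilityMeasure α] (hα : ∀ᵐ x ∂α, ‖x‖ ≤ RX)
    (hβ : ∀ᵐ y ∂β, ‖y‖ ≤ RY) (hν : ν ∈ couplings α β) : ‖crossMoment ν‖ ≤ RX * RY := by
  have := isProbabilityMeasure_of_mem_couplings hν
  simpa [crossMoment] using norm_integral_le_of_norm_le_const (ae_norm_outerProd_le hα hβ hν)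

lemma integrable_norm_outerProd_sq [IsProbabilityMeasure α] (hα : ∀ᵐ x ∂α, ‖x‖ ≤ RX)
    (hβ : ∀ᵐ y ∂β, ‖y‖ ≤ RY) (hν : ν ∈ couplings α β) :
    Integrable (fun p => ‖outerProd p‖ ^ 2) ν := by
  have := isProbabilityMeasure_of_mem_couplings hν
  refine .of_bound (continuous_outerProd.norm.pow 2).aestronglyMeasurable ((RX * RY) ^ 2) ?_
  filter_upwards [ae_norm_outerProd_le hα hβ hν] with p hp
  rw [norm_pow, norm_norm]
  exact pow_le_pow_left₀ (norm_nonneg _) hp 2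

lemma integrable_transportCost [IsProbabilityMeasure α] (hα : ∀ᵐ x ∂α, ‖x‖ ≤ RX)
    (hβ : ∀ᵐ y ∂β, ‖y‖ ≤ RY) (hν : ν ∈ couplings α β) (Γ : EuclideanSpace ℝ (Fin D × Fin E)) :
    Integrable (transportCost Γ) ν := by
  simp_rw [funext (transportCost_eq Γ)]
  exact (((integrable_outerProd hα hβ hν).const_inner (𝕜 := ℝ) Γ).const_mul _).sub
    ((integrable_norm_outerProd_sq hα hβ hν).const_mul _)

lemma entropicObjective_eq_add_inner [IsProbabilityMeasure α] (hα : ∀ᵐ x ∂α, ‖x‖ ≤ RX)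
    (hβ : ∀ᵐ y ∂β, ‖y‖ ≤ RY) (hν : ν ∈ couplings α β) (Γ : EuclideanSpace ℝ (Fin D × Fin E)) :
    entropicObjective α β ε Γ ν =
      entropicObjective α β ε 0 ν + ⟪Γ, (-16 : ℝ) • crossMoment ν⟫ := by
  have hinner := (integrable_outerProd hα hβ hν).const_inner (𝕜 := ℝ) Γ
  have hsq := integrable_norm_outerProd_sq hα hβ hν
  simp only [entropicObjective, transportCost_eq, inner_zero_left, mul_zero, zero_sub]
  rw [integral_sub (hinner.const_mul _) (hsq.const_mul _), integral_neg, integral_const_mul,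
    integral_inner (integrable_outerProd hα hβ hν), inner_smul_right, crossMoment]
  ring

lemma le_entropicObjective [IsProbabilityMeasure α] [IsProbabilityMeasure β]
    (hα : ∀ᵐ x ∂α, ‖x‖ ≤ RX) (hβ : ∀ᵐ y ∂β, ‖y‖ ≤ RY) (hε : 0 ≤ ε)
    (hν : ν ∈ finiteEntropyCouplings α β) (Γ : EuclideanSpace ℝ (Fin D × Fin E)) :
    -(16 * ‖Γ‖ * (RX * RY) + 4 * (RX * RY) ^ 2) ≤ entropicObjective α β ε Γ ν := by
  have := isProbabilityMeasure_of_mem_couplings hν.1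
  have hsq : ∫ p, ‖outerProd p‖ ^ 2 ∂ν ≤ (RX * RY) ^ 2 := by
    simpa using integral_mono_ae (integrable_norm_outerProd_sq hα hβ hν.1)
      (integrable_const ((RX * RY) ^ 2)) (by
        filter_upwards [ae_norm_outerProd_le hα hβ hν.1] with p hp
        exact pow_le_pow_left₀ (norm_nonneg _) hp 2)
  have hinner : |⟪Γ, (-16 : ℝ) • crossMoment ν⟫| ≤ ‖Γ‖ * (16 * (RX * RY)) := by
    refine (abs_real_inner_le_norm _ _).trans (mul_le_mul_of_nonneg_left ?_ (norm_nonneg _))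
    rw [norm_smul]
    norm_num
    exact norm_crossMoment_le hα hβ hν.1
  have hkl := mul_nonneg hε (integral_llr_nonneg hν.2.1 hν.2.2)
  rw [entropicObjective_eq_add_inner hα hβ hν.1]
  simp only [entropicObjective, transportCost_eq, inner_zero_left, mul_zero, zero_sub,
    integral_neg, integral_const_mul]
  linarith [abs_le.1 hinner]

lemma otGamma_le_coe_entropicObjective (hν : ν ∈ finiteEntropyCouplings α β)
    (Γ : EuclideanSpace ℝ (Fin D × Fin E)) :
    otGamma α β ε Γ ≤ (entropicObjective α β ε Γ ν : EReal) := by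
  refine (iInf₂_le ν hν.1).trans_eq ?_
  rw [klE, if_pos hν.2, entropicObjective, EReal.coe_add, EReal.coe_mul]
  rfl

lemma coe_le_otGamma (hε : 0 < ε) {Γ : EuclideanSpace ℝ (Fin D × Fin E)} {b : ℝ}
    (hb : b ∈ lowerBounds (entropicObjective α β ε Γ '' finiteEntropyCouplings α β)) :
    (b : EReal) ≤ otGamma α β ε Γ := by
  refine le_iInf₂ fun ν hν => ?_
  by_cases hfin : ν ≪ α.prod β ∧ Integrable (llr ν (α.prod β)) ν
  · have hb' : (b : EReal) ≤ entropicObjective α β ε Γ ν := mod_cast hb ⟨ν, ⟨hν, hfin⟩, rfl⟩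
    rw [entropicObjective, EReal.coe_add, EReal.coe_mul] at hb'
    rwa [klE, if_pos hfin]
  · rw [klE, if_neg hfin, EReal.coe_mul_top_of_pos hε, EReal.coe_add_top]
    exact le_top

lemma coe_toReal_otGamma [IsProbabilityMeasure α] [IsProbabilityMeasure β]
    (hα : ∀ᵐ x ∂α, ‖x‖ ≤ RX) (hβ : ∀ᵐ y ∂β, ‖y‖ ≤ RY) (hε : 0 < ε)
    (Γ : EuclideanSpace ℝ (Fin D × Fin E)) :
    ((otGamma α β ε Γ).toReal : EReal) = otGamma α β ε Γ := by
  have hprod : α.prod β ∈ finiteEntropyCouplings α β :=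
    ⟨prod_mem_couplings, .rfl, (integrable_congr (llr_self _)).2 (integrable_zero _ _ _)⟩
  refine EReal.coe_toReal ?_ ?_
  · exact ((otGamma_le_coe_entropicObjective hprod Γ).trans_lt (EReal.coe_lt_top _)).ne
  · refine ((EReal.bot_lt_coe _).trans_le
      (coe_le_otGamma (b := -(16 * ‖Γ‖ * (RX * RY) + 4 * (RX * RY) ^ 2)) hε ?_)).ne'
    rintro _ ⟨ν, hν, rfl⟩
    exact le_entropicObjective hα hβ hε.le hν Γ

lemma isGLB_toReal_otGamma [IsProbabilityMeasure α] [IsProbabilityMeasure β]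
    (hα : ∀ᵐ x ∂α, ‖x‖ ≤ RX) (hβ : ∀ᵐ y ∂β, ‖y‖ ≤ RY) (hε : 0 < ε)
    (Γ : EuclideanSpace ℝ (Fin D × Fin E)) :
    IsGLB (entropicObjective α β ε Γ '' finiteEntropyCouplings α β) (otGamma α β ε Γ).toReal := by
  have hfin := coe_toReal_otGamma hα hβ hε Γ
  refine ⟨?_, fun b hb => ?_⟩
  · rintro _ ⟨ν, hν, rfl⟩
    exact_mod_cast hfin ▸ otGamma_le_coe_entropicObjective hν Γ
  · exact_mod_cast hfin ▸ coe_le_otGamma hε hb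

lemma mem_finiteEntropyCouplings_of_eq_otGamma (hε : 0 < ε)
    {Γ : EuclideanSpace ℝ (Fin D × Fin E)}
    (hfin : ((otGamma α β ε Γ).toReal : EReal) = otGamma α β ε Γ) (hπ : π ∈ couplings α β)
    (hopt : ((∫ p, transportCost Γ p ∂π : ℝ) : EReal) + ε * klE π (α.prod β) = otGamma α β ε Γ) :
    π ∈ finiteEntropyCouplings α β ∧ entropicObjective α β ε Γ π = (otGamma α β ε Γ).toReal := by
  by_cases hπfin : π ≪ α.prod β ∧ Integrable (llr π (α.prod β)) π
  · refine ⟨⟨hπ, hπfin⟩, ?_⟩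
    rw [klE, if_pos hπfin, ← hfin, ← EReal.coe_mul, ← EReal.coe_add] at hopt
    exact_mod_cast hopt
  · rw [klE, if_neg hπfin, EReal.coe_mul_top_of_pos hε, EReal.coe_add_top] at hopt
    exact absurd (hfin.trans hopt.symm) (EReal.coe_ne_top _)

lemma avgMeasure_mem_finiteEntropyCouplings [IsProbabilityMeasure α] [IsProbabilityMeasure β]
    {ν₁ ν₂ : Measure (EuclideanSpace ℝ (Fin D) × EuclideanSpace ℝ (Fin E))}
    (h₁ : ν₁ ∈ finiteEntropyCouplings α β) (h₂ : ν₂ ∈ finiteEntropyCouplings α β) :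
    avgMeasure ν₁ ν₂ ∈ finiteEntropyCouplings α β := by
  have := isProbabilityMeasure_of_mem_couplings h₁.1
  have := isProbabilityMeasure_of_mem_couplings h₂.1
  exact ⟨avgMeasure_mem_couplings h₁.1 h₂.1, avgMeasure_absolutelyContinuous h₁.2.1 h₂.2.1,
    integrable_llr_avgMeasure h₁.2.1 h₂.2.1 h₁.2.2 h₂.2.2⟩

lemma entropicObjective_midpoint_gap [IsProbabilityMeasure α] (hα : ∀ᵐ x ∂α, ‖x‖ ≤ RX)
    (hβ : ∀ᵐ y ∂β, ‖y‖ ≤ RY) {ν₁ ν₂ : Measure (EuclideanSpace ℝ (Fin D) × EuclideanSpace ℝ (Fin E))}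
    (h₁ : ν₁ ∈ couplings α β) (h₂ : ν₂ ∈ couplings α β) (Γ : EuclideanSpace ℝ (Fin D × Fin E)) :
    entropicObjective α β ε Γ ν₁ / 2 + entropicObjective α β ε Γ ν₂ / 2 -
        entropicObjective α β ε Γ (avgMeasure ν₁ ν₂) =
      ε * ((∫ p, llr ν₁ (α.prod β) p ∂ν₁) / 2 + (∫ p, llr ν₂ (α.prod β) p ∂ν₂) / 2 -
        ∫ p, llr (avgMeasure ν₁ ν₂) (α.prod β) p ∂avgMeasure ν₁ ν₂) := by
  simp only [entropicObjective]
  rw [integral_avgMeasure (integrable_transportCost hα hβ h₁ Γ)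
    (integrable_transportCost hα hβ h₂ Γ), smul_eq_mul]
  ring

lemma norm_crossMoment_sub_le [IsProbabilityMeasure α] [IsProbabilityMeasure β]
    (hα : ∀ᵐ x ∂α, ‖x‖ ≤ RX) (hβ : ∀ᵐ y ∂β, ‖y‖ ≤ RY)
    {ν₁ ν₂ : Measure (EuclideanSpace ℝ (Fin D) × EuclideanSpace ℝ (Fin E))}
    (h₁ : ν₁ ∈ finiteEntropyCouplings α β) (h₂ : ν₂ ∈ finiteEntropyCouplings α β) :
    ‖crossMoment ν₁ - crossMoment ν₂‖ ≤ RX * RY *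
      ∫ p, |(ν₁.rnDeriv (α.prod β) p).toReal - (ν₂.rnDeriv (α.prod β) p).toReal| ∂α.prod β := by
  have := isProbabilityMeasure_of_mem_couplings h₁.1
  have := isProbabilityMeasure_of_mem_couplings h₂.1
  exact norm_integral_sub_integral_le h₁.2.1 h₂.2.1 (integrable_outerProd hα hβ h₁.1)
    (integrable_outerProd hα hβ h₂.1) (ae_norm_outerProd_le hα hβ prod_mem_couplings)

lemma crossMoment_stable [IsProbabilityMeasure α] [IsProbabilityMeasure β]
    (hα : ∀ᵐ x ∂α, ‖x‖ ≤ RX) (hβ : ∀ᵐ y ∂β, ‖y‖ ≤ RY) (hε : 0 < ε)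
    {Γ : EuclideanSpace ℝ (Fin D × Fin E)} (hπ : π ∈ finiteEntropyCouplings α β)
    (hmin : ∀ ν ∈ finiteEntropyCouplings α β,
      entropicObjective α β ε Γ π ≤ entropicObjective α β ε Γ ν)
    {κ : ℝ} (hκ : 0 < κ) :
    ∃ η > 0, ∀ ν ∈ finiteEntropyCouplings α β,
      entropicObjective α β ε Γ ν ≤ entropicObjective α β ε Γ π + η →
        ‖crossMoment ν - crossMoment π‖ ≤ κ := by
  have hRX : 0 ≤ RX := hα.exists.elim fun x hx => (norm_nonneg x).trans hx
  have hRY : 0 ≤ RY := hβ.exists.elim fun y hy => (norm_nonneg y).trans hy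
  set B := RX * RY
  have hB : 0 ≤ B := mul_nonneg hRX hRY
  set s := κ / (B + 1)
  have hs : 0 < s := by positivity
  refine ⟨ε * s ^ 2 / 16, by positivity, fun ν hν hνη => ?_⟩
  have := isProbabilityMeasure_of_mem_couplings hπ.1
  have := isProbabilityMeasure_of_mem_couplings hν.1
  have hgap := entropicObjective_midpoint_gap (ε := ε) hα hβ hπ.1 hν.1 Γ
  have hmid := hmin _ (avgMeasure_mem_finiteEntropyCouplings hπ hν)
  have hL1 := integral_abs_sub_toReal_rnDeriv_le hπ.2.1 hν.2.1 hπ.2.2 hν.2.2 hs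
  set gap := (∫ p, llr π (α.prod β) p ∂π) / 2 + (∫ p, llr ν (α.prod β) p ∂ν) / 2 -
    ∫ p, llr (avgMeasure π ν) (α.prod β) p ∂avgMeasure π ν
  have hgap_le : 16 / s * gap ≤ s / 2 := by
    have hεgap : ε * gap ≤ ε * (s ^ 2 / 32) := by linarith
    calc 16 / s * gap ≤ 16 / s * (s ^ 2 / 32) := by gcongr; exact le_of_mul_le_mul_left hεgap hε
      _ = s / 2 := by field_simp; ring
  calc ‖crossMoment ν - crossMoment π‖
      ≤ B * ∫ p, |(π.rnDeriv (α.prod β) p).toReal - (ν.rnDeriv (α.prod β) p).toReal|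
          ∂α.prod β := norm_sub_rev (crossMoment π) _ ▸ norm_crossMoment_sub_le hα hβ hπ hν
    _ ≤ (B + 1) * s := by gcongr <;> linarith
    _ = κ := mul_div_cancel₀ κ (by positivity)

theorem hasGradientAt_toReal_otGamma [IsProbabilityMeasure α] [IsProbabilityMeasure β]
    (hα : ∀ᵐ x ∂α, ‖x‖ ≤ RX) (hβ : ∀ᵐ y ∂β, ‖y‖ ≤ RY) (hε : 0 < ε)
    {Γ : EuclideanSpace ℝ (Fin D × Fin E)} (hπ : π ∈ finiteEntropyCouplings α β)
    (hopt : entropicObjective α β ε Γ π = (otGamma α β ε Γ).toReal) :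
    HasGradientAt (fun Γ' => (otGamma α β ε Γ').toReal) ((-16 : ℝ) • crossMoment π) Γ := by
  have hglb := isGLB_toReal_otGamma hα hβ hε
  have haffine : ∀ Γ', ∀ ν ∈ finiteEntropyCouplings α β, entropicObjective α β ε Γ' ν =
      entropicObjective α β ε 0 ν + ⟪Γ', (-16 : ℝ) • crossMoment ν⟫ :=
    fun Γ' ν hν => entropicObjective_eq_add_inner hα hβ hν.1 Γ'
  refine hasGradientAt_of_isGLB_affine (a := entropicObjective α β ε 0)
    (m := fun ν => (-16 : ℝ) • crossMoment ν) (R := 16 * (RX * RY)) (fun Γ' => ?_)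
    (fun ν hν => ?_) hπ
    (by rw [← hopt, haffine Γ π hπ]) fun κ hκ => ?_
  · exact Set.image_congr (fun ν hν => haffine Γ' ν hν) ▸ hglb Γ'
  · rw [norm_smul]
    norm_num
    exact norm_crossMoment_le hα hβ hν.1
  · have hmin : ∀ ν ∈ finiteEntropyCouplings α β,
        entropicObjective α β ε Γ π ≤ entropicObjective α β ε Γ ν :=
      fun ν hν => hopt ▸ (hglb Γ).1 ⟨ν, hν, rfl⟩
    obtain ⟨η, hη, hstable⟩ := crossMoment_stable hα hβ hε hπ hmin (by positivity : 0 < κ / 16)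
    refine ⟨η, hη, fun ν hν hνη => ?_⟩
    rw [← haffine Γ ν hν, ← hopt] at hνη
    rw [← smul_sub, norm_smul]
    norm_num
    linarith [hstable ν hν hνη]

end BoundedSupport

end EntropicOT

theorem dual_function_gradient_general {D E : ℕ}
    (α : Measure (EuclideanSpace ℝ (Fin D))) (β : Measure (EuclideanSpace ℝ (Fin E)))
    [IsProbabilityMeasure α] [IsProbabilityMeasure β]
    (KX : Set (EuclideanSpace ℝ (Fin D))) (KY : Set (EuclideanSpace ℝ (Fin E)))
    (hKX : IsCompact KX) (hKY : IsCompact KY) (hαK : α KXᶜ = 0) (hβK : β KYᶜ = 0)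
    (ε : ℝ) (hε : 0 < ε)
    (Γ : EuclideanSpace ℝ (Fin D × Fin E))
    (π : Measure (EuclideanSpace ℝ (Fin D) × EuclideanSpace ℝ (Fin E)))
    (hπ : π ∈ couplings α β)
    (hopt : ((∫ p, (-16 * ∑ q : Fin D × Fin E, Γ q * (p.1 q.1 * p.2 q.2)
          - 4 * ‖p.1‖ ^ 2 * ‖p.2‖ ^ 2) ∂π : ℝ) : EReal)
        + (ε : EReal) * klE π (α.prod β) = otGamma α β ε Γ) :
    HasGradientAt
      (fun Γ' : EuclideanSpace ℝ (Fin D × Fin E) =>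
        (∑ q : Fin D × Fin E, (Γ' q) ^ 2) + (1 / 8) * (otGamma α β ε Γ').toReal)
      ((WithLp.equiv 2 (Fin D × Fin E → ℝ)).symm
        fun q => 2 * Γ q - 2 * ∫ p, p.1 q.1 * p.2 q.2 ∂π)
      Γ := by
  obtain ⟨RX, hα⟩ := exists_ae_norm_le_of_isCompact hKX hαK
  obtain ⟨RY, hβ⟩ := exists_ae_norm_le_of_isCompact hKY hβK
  obtain ⟨hπS, hπopt⟩ :=
    mem_finiteEntropyCouplings_of_eq_otGamma hε (coe_toReal_otGamma hα hβ hε Γ) hπ hopt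
  have hgrad := (hasGradientAt_toReal_otGamma hα hβ hε hπS hπopt).norm_sq_add_const_mul (1 / 8)
  convert hgrad using 1
  · funext Γ'
    rw [EuclideanSpace.real_norm_sq_eq]
  · ext q
    simp [crossMoment_apply (integrable_outerProd hα hβ hπ)]
    ring

/-- the dual function `D_ε(Γ) = ‖Γ‖_F² + (1/8) OT_ε^Γ(α,β)` is
differentiable at any `Γ` where the entropic OT problem has a minimizer `π`, with
gradient `2Γ - 2 ∫ x yᵀ dπ` for the Frobenius inner product. -/
theorem dual_function_gradient {D E : ℕ}
    (α : Measure (EuclideanSpace ℝ (Fin D))) (β : Measure (EuclideanSpace ℝ (Fin E)))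
    [IsProbabilityMeasure α] [IsProbabilityMeasure β]
    (KX : Set (EuclideanSpace ℝ (Fin D))) (KY : Set (EuclideanSpace ℝ (Fin E)))
    (hKX : IsCompact KX) (hKY : IsCompact KY) (hαK : α KXᶜ = 0) (hβK : β KYᶜ = 0)
    (hαcentered : ∫ x, x ∂α = 0) (hβcentered : ∫ y, y ∂β = 0)
    (ε : ℝ) (hε : 0 < ε)
    (Γ : EuclideanSpace ℝ (Fin D × Fin E))
    (π : Measure (EuclideanSpace ℝ (Fin D) × EuclideanSpace ℝ (Fin E)))
    (hπ : π ∈ couplings α β)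
    (hopt : ((∫ p, (-16 * ∑ q : Fin D × Fin E, Γ q * (p.1 q.1 * p.2 q.2)
          - 4 * ‖p.1‖ ^ 2 * ‖p.2‖ ^ 2) ∂π : ℝ) : EReal)
        + (ε : EReal) * klE π (α.prod β) = otGamma α β ε Γ) :
    HasGradientAt
      (fun Γ' : EuclideanSpace ℝ (Fin D × Fin E) =>
        (∑ q : Fin D × Fin E, (Γ' q) ^ 2) + (1 / 8) * (otGamma α β ε Γ').toReal)
      ((WithLp.equiv 2 (Fin D × Fin E → ℝ)).symm
        fun q => 2 * Γ q - 2 * ∫ p, p.1 q.1 * p.2 q.2 ∂π)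
      Γ :=
  dual_function_gradient_general α β KX KY hKX hKY hαK hβK ε hε Γ π hπ hopt
end
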